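/- If f₁ : (V₁, L₁) → (V₂, L₂) and f₂ : (V₂, L₂) → (V₃, L₃) are linear Dirac maps, then f₂ ∘ f₁ : (V₁, L₁) → (V₃, L₃) is a linear Dirac map. Consequently, vector spaces with linear Dirac structures and linear Dirac maps form a category. -/

import Mathlib

/-- The canonical pairing on `V ⊕ V*`: `⟨X+ξ, Y+η⟩ = η(X) + ξ(Y)`. -/
def diracPair {K V : Type*} [Field K] [AddCommGroup V] [Module K V]
    (p q : V × Module.Dual K V) : K :=
  q.2 p.1 + p.2 q.1

/-- A linear Dirac structure: a subset of `V ⊕ V*` equal to its own orthogonal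
complement with respect to the canonical pairing (hence automatically a maximal
isotropic linear subspace). -/
def IsDirac {K V : Type*} [Field K] [AddCommGroup V] [Module K V]
    (L : Set (V × Module.Dual K V)) : Prop :=
  ∀ p, p ∈ L ↔ ∀ q ∈ L, diracPair p q = 0


section Aux

variable {K V : Type*} [Field K] [AddCommGroup V] [Module K V]

/-- A Dirac set is the carrier of a submodule. -/
def diracSubmodule (L : Set (V × Module.Dual K V)) (hL : IsDirac L) :
    Submodule K (V × Module.Dual K V) where
  carrier := L
  add_mem' {a b} ha hb := by
    rw [hL] at ha hb ⊢
    intro q hq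
    have h1 := ha q hq; have h2 := hb q hq
    simp only [diracPair] at h1 h2
    simp only [diracPair, Prod.fst_add, Prod.snd_add, map_add,
      LinearMap.add_apply]
    linear_combination h1 + h2
  zero_mem' := by
    rw [hL]; intro q hq; simp [diracPair]
  smul_mem' c a ha := by
    rw [hL] at ha ⊢
    intro q hq
    have h1 := ha q hq
    simp only [diracPair] at h1
    simp only [diracPair, Prod.smul_fst, Prod.smul_snd, map_smul,
      LinearMap.smul_apply, smul_eq_mul]
    linear_combination c * h1

lemma exists_fst_of_dirac [FiniteDimensional K V]
    (L : Set (V × Module.Dual K V)) (hL : IsDirac L) (η : Module.Dual K V)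
    (h : ∀ v : V, (v, (0 : Module.Dual K V)) ∈ L → η v = 0) :
    ∃ w : V, (w, η) ∈ L := by
  set M := diracSubmodule L hL
  set S : Subspace K (Module.Dual K V) :=
    M.map (LinearMap.snd K V (Module.Dual K V)) with hS
  have hT : ∀ v : V, v ∈ S.dualCoannihilator ↔ (v, (0 : Module.Dual K V)) ∈ L := by
    intro v
    rw [Submodule.mem_dualCoannihilator]
    constructor
    · intro hv
      rw [hL]
      intro q hq
      have : q.2 ∈ S := ⟨q, hq, rfl⟩
      simp [diracPair, hv q.2 this]
    · intro hv φ hφ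
      obtain ⟨q, hq, rfl⟩ := hφ
      have := (hL _).mp hv q hq
      simpa [diracPair] using this
  have hη : η ∈ S.dualCoannihilator.dualAnnihilator := by
    rw [Submodule.mem_dualAnnihilator]
    intro w hw
    exact h w ((hT w).mp hw)
  rw [Subspace.dualCoannihilator_dualAnnihilator_eq] at hη
  obtain ⟨⟨w, ζ⟩, hq, h2⟩ := hη
  exact ⟨w, by rw [← show ζ = η from h2]; exact hq⟩

end Aux

/-- A linear Dirac map: (M1) `f(L₁ ∩ V₁) ⊆ L₂ ∩ V₂` and (M2′) whenever
`Y + ξ ∈ L₂` and `X + f*ξ ∈ L₁`, then `fX + ξ ∈ L₂`. -/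
def IsDiracMap {K V₁ V₂ : Type*} [Field K]
    [AddCommGroup V₁] [Module K V₁] [AddCommGroup V₂] [Module K V₂]
    (f : V₁ →ₗ[K] V₂)
    (L₁ : Set (V₁ × Module.Dual K V₁)) (L₂ : Set (V₂ × Module.Dual K V₂)) : Prop :=
  (∀ x : V₁, (x, (0 : Module.Dual K V₁)) ∈ L₁ →
      (f x, (0 : Module.Dual K V₂)) ∈ L₂) ∧
  (∀ (X : V₁) (Y : V₂) (ξ : Module.Dual K V₂),
      (Y, ξ) ∈ L₂ → (X, f.dualMap ξ) ∈ L₁ → (f X, ξ) ∈ L₂)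

/-- The composition of linear Dirac maps is a linear Dirac map (hence vector spaces
with linear Dirac structures and linear Dirac maps form a category). -/
theorem isDiracMap_comp
    {K V₁ V₂ V₃ : Type*} [Field K]
    [AddCommGroup V₁] [Module K V₁] [FiniteDimensional K V₁]
    [AddCommGroup V₂] [Module K V₂] [FiniteDimensional K V₂]
    [AddCommGroup V₃] [Module K V₃] [FiniteDimensional K V₃]
    (f₁ : V₁ →ₗ[K] V₂) (f₂ : V₂ →ₗ[K] V₃)
    (L₁ : Set (V₁ × Module.Dual K V₁)) (hL₁ : IsDirac L₁)
    (L₂ : Set (V₂ × Module.Dual K V₂)) (hL₂ : IsDirac L₂)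
    (L₃ : Set (V₃ × Module.Dual K V₃)) (hL₃ : IsDirac L₃)
    (h₁ : IsDiracMap f₁ L₁ L₂) (h₂ : IsDiracMap f₂ L₂ L₃) :
    IsDiracMap (f₂ ∘ₗ f₁) L₁ L₃ := by
  constructor
  · intro x hx
    exact h₂.1 (f₁ x) (h₁.1 x hx)
  · intro X Y ξ hY hX
    have hann : ∀ v : V₂, (v, (0 : Module.Dual K V₂)) ∈ L₂ → f₂.dualMap ξ v = 0 := by
      intro v hv
      have h3 : (f₂ v, (0 : Module.Dual K V₃)) ∈ L₃ := h₂.1 v hv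
      have := (hL₃ _).mp hY _ h3
      simpa [diracPair] using this
    obtain ⟨w, hw⟩ := exists_fst_of_dirac L₂ hL₂ (f₂.dualMap ξ) hann
    have hX' : (X, f₁.dualMap (f₂.dualMap ξ)) ∈ L₁ := hX
    have h2 : (f₁ X, f₂.dualMap ξ) ∈ L₂ := h₁.2 X w (f₂.dualMap ξ) hw hX'
    exact h₂.2 (f₁ X) Y ξ hY h2
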